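/- arXiv:1601.04920 — 4 statements merged into one kernel-verified Lean document; each statement's English description precedes it below -/
import Mathlib

section
/- Let G and H be groups and G' = G ⋊ H their semidirect product (with G normal), acting freely on a finite set P; let G also act on a finite set P'. Choose a set B ⊆ P of representatives of the G'-orbits of P, so every v ∈ P lying in the orbit of b ∈ B can be written uniquely as v = (g,h).b with (g,h) ∈ G'. Let W : ℂ^{P'} → ℂ^{P} be linear and equivariant with respect to the actions of G (where G acts on P through the inclusion g ↦ (g,1) into G', and on functions by (g.x)(v) = x(g.v)). Then for every h ∈ H and b ∈ B there exists a filter w_{h,b} ∈ ℂ^{P'} such that for all x : P' → ℂ, g ∈ G, h ∈ H, b ∈ B: (Wx)((g,h).b) = Σ_{v' ∈ P'} x(v') w_{h,b}(g⁻¹.v'). In other words, W is a convolution along the orbits of G. -/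
open scoped BigOperators

/-- Proposition 1: if the symmetry group factorizes as a semidirect product
`G' = G ⋊ H` acting freely on the index set `P` of a layer, with orbit
representatives `B`, then every linear operator `W : ℂ^{P'} → ℂ^{P}`
equivariant with respect to `G` is a convolution along the orbits of `G`:
`(Wx)((g,h).b) = Σ_{v'} x(v') w_{h,b}(g⁻¹.v')`. -/
theorem semidirect_equivariant_is_convolution
    {G H P P' : Type*} [Group G] [Group H] (φ : H →* MulAut G)
    [Fintype P] [Fintype P'] [MulAction (G ⋊[φ] H) P] [MulAction G P']
    (hfree : ∀ (g' : G ⋊[φ] H) (v : P), g' • v = v → g' = 1)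
    (B : Set P)
    (hrep : ∀ v : P, ∃! gb : (G ⋊[φ] H) × B, gb.1 • (gb.2 : P) = v)
    (W : (P' → ℂ) →ₗ[ℂ] (P → ℂ))
    (hequiv : ∀ (g : G) (x : P' → ℂ),
      W (fun v' => x (g • v')) = fun v => W x ((SemidirectProduct.inl g : G ⋊[φ] H) • v)) :
    ∃ w : H → B → P' → ℂ, ∀ (x : P' → ℂ) (g : G) (h : H) (b : B),
      W x ((⟨g, h⟩ : G ⋊[φ] H) • (b : P)) = ∑ v' : P', x v' * w h b (g⁻¹ • v') := by
  classical
  refine ⟨fun h b v' => W (Pi.single v' 1) ((⟨1, h⟩ : G ⋊[φ] H) • (b : P)), ?_⟩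
  intro x g h b
  have hsplit : (⟨g, h⟩ : G ⋊[φ] H) = (SemidirectProduct.inl g : G ⋊[φ] H) * ⟨1, h⟩ := by
    ext <;> simp
  have hx : x = ∑ v' : P', x v' • (Pi.single v' (1 : ℂ) : P' → ℂ) := by
    funext u
    simp [Pi.single_apply]
  calc W x ((⟨g, h⟩ : G ⋊[φ] H) • (b : P))
      = ∑ v' : P', x v' * W (Pi.single v' 1) ((⟨g, h⟩ : G ⋊[φ] H) • (b : P)) := by
        conv_lhs => rw [hx, map_sum]
        simp [Finset.sum_apply, mul_comm]
    _ = ∑ v' : P', x v' * W (Pi.single (g⁻¹ • v') 1) ((⟨1, h⟩ : G ⋊[φ] H) • (b : P)) := by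
        refine Finset.sum_congr rfl fun v' _ => ?_
        congr 1
        have key := congrFun (hequiv g (Pi.single v' (1 : ℂ)))
          ((⟨1, h⟩ : G ⋊[φ] H) • (b : P))
        have hsingle : (fun u => (Pi.single v' (1 : ℂ) : P' → ℂ) (g • u))
            = (Pi.single (g⁻¹ • v') (1 : ℂ) : P' → ℂ) := by
          funext u
          simp only [Pi.single_apply]
          congr 1
          rw [eq_comm, smul_eq_iff_eq_inv_smul]
        rw [hsingle] at key
        rw [hsplit, mul_smul, ← key]
end

section
/- Let G be a finite group. For g ∈ G define the translation of a function x : G → ℂ by (g.x)(u) = x(gu). If W : ℂ^G → ℂ^G is a linear operator commuting with all translations, i.e. W(g.x) = g.(Wx) for every g ∈ G and every x : G → ℂ, then there exists a filter w : G → ℂ such that for all x and all u ∈ G: (Wx)(u) = Σ_{v ∈ G} x(v) w(u⁻¹ v); that is, W is a group convolution. -/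
open scoped BigOperators

/-- A linear operator on functions on a finite group `G` that commutes with all
translations `(g.x)(u) = x(gu)` is a group convolution:
`(Wx)(u) = Σ_v x(v) w(u⁻¹ v)` for some filter `w`. -/
theorem translation_equivariant_is_group_convolution
    {G : Type*} [Group G] [Fintype G]
    (W : (G → ℂ) →ₗ[ℂ] (G → ℂ))
    (hequiv : ∀ (g : G) (x : G → ℂ), W (fun u => x (g * u)) = fun u => W x (g * u)) :
    ∃ w : G → ℂ, ∀ (x : G → ℂ) (u : G), W x u = ∑ v : G, x v * w (u⁻¹ * v) := by
  classical
  set δ : G → ℂ := fun u => if u = 1 then 1 else 0 with hδ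
  refine ⟨fun t => W δ t⁻¹, fun x u => ?_⟩
  have hx : x = ∑ v : G, x v • (fun u => δ (v⁻¹ * u)) := by
    funext u
    simp [δ, Finset.sum_apply, inv_mul_eq_one]
  have h1 : W x = ∑ v : G, x v • W (fun u => δ (v⁻¹ * u)) := by
    conv_lhs => rw [hx]
    rw [map_sum]
    simp [map_smul]
  rw [h1]
  simp only [Finset.sum_apply, Pi.smul_apply, smul_eq_mul]
  refine Finset.sum_congr rfl fun v _ => ?_
  rw [hequiv v⁻¹ δ]
  simp [mul_inv_rev]
end

section
/- Let G be a finite abelian group (the spatial grid) and K, K' finite channel index sets. Translations act on x : G × K' → ℂ by (T_c x)(u,k') = x(u−c, k') for c ∈ G, and similarly on functions on G × K. If W : ℂ^{G×K'} → ℂ^{G×K} is a linear operator commuting with all translations (W(T_c x) = T_c(Wx) for every c ∈ G), then there exist filters w_{k,k'} : G → ℂ for (k,k') ∈ K × K' such that for all x, u ∈ G, k ∈ K: (Wx)(u,k) = Σ_{k' ∈ K'} Σ_{v ∈ G} x(v,k') w_{k,k'}(u−v). That is, every translation-covariant linear layer is a sum of convolutions across channels. -/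
open scoped BigOperators

/-- Every translation-covariant linear layer on multi-channel signals over a
finite abelian group `G` is a sum of convolutions across channels:
`(Wx)(u,k) = Σ_{k'} Σ_v x(v,k') w_{k,k'}(u − v)`. -/
theorem translation_covariant_layer_is_sum_of_convolutions
    {G K K' : Type*} [AddCommGroup G] [Fintype G] [Fintype K] [Fintype K']
    (W : (G × K' → ℂ) →ₗ[ℂ] (G × K → ℂ))
    (hcov : ∀ (c : G) (x : G × K' → ℂ),
      W (fun p => x (p.1 - c, p.2)) = fun p => W x (p.1 - c, p.2)) :
    ∃ w : K → K' → G → ℂ, ∀ (x : G × K' → ℂ) (u : G) (k : K),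
      W x (u, k) = ∑ k' : K', ∑ v : G, x (v, k') * w k k' (u - v) := by
  classical
  set δ : G × K' → (G × K' → ℂ) := fun q p => if p = q then 1 else 0 with hδ
  refine ⟨fun k k' t => W (δ (0, k')) (t, k), ?_⟩
  intro x u k
  have hx : x = ∑ q : G × K', x q • δ q := by
    funext p
    simp [hδ, Finset.sum_ite_eq', Finset.mem_univ]
  have hdelta : ∀ (v : G) (k' : K'),
      δ (v, k') = fun p : G × K' => δ (0, k') (p.1 - v, p.2) := by
    intro v k'
    funext p
    simp only [hδ, Prod.mk.injEq, sub_eq_zero]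
    congr 1
    simp [Prod.ext_iff]
  calc W x (u, k) = (∑ q : G × K', x q • W (δ q)) (u, k) := by
        conv_lhs => rw [hx]
        rw [map_sum]
        simp only [map_smul]
    _ = ∑ q : G × K', x q * W (δ q) (u, k) := by
        simp [Finset.sum_apply]
    _ = ∑ v : G, ∑ k' : K', x (v, k') * W (δ (v, k')) (u, k) := by
        exact Fintype.sum_prod_type (f := fun q => x q * W (δ q) (u, k))
    _ = ∑ k' : K', ∑ v : G, x (v, k') * W (δ (0, k')) (u - v, k) := by
        rw [Finset.sum_comm]
        congr 1; funext k'; congr 1; funext v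
        rw [hdelta v k', hcov v (δ (0, k'))]
    _ = ∑ k' : K', ∑ v : G, x (v, k') * (fun t => W (δ (0, k')) (t, k)) (u - v) := rfl
end

section
/- Let φ : ℝⁿ → ℝ be continuously differentiable with compact support, and for J ∈ ℤ set φ_J(u) = 2^{−nJ} φ(2^{−J}u). Let x ∈ L²(ℝⁿ), c ∈ ℝⁿ, and let (T_c x)(u) = x(u − c) denote translation. Then ‖(T_c x) ⋆ φ_J − x ⋆ φ_J‖_{L²} ≤ 2^{−J} ‖c‖ · ‖∇φ‖_{L¹} · ‖x‖_{L²}, where ⋆ is convolution on ℝⁿ and ‖∇φ‖_{L¹} = ∫ |∇φ(u)| du. Hence the averaging Φ_J x = x ⋆ φ_J becomes invariant to translations of size small compared to 2^J. -/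
/-!
Translation commutes with convolution, so `(T_c x) ⋆ φ_J - x ⋆ φ_J = x ⋆ (T_c φ_J - φ_J)`, and
Young's inequality `‖x ⋆ h‖₂ ≤ ‖h‖₁ ‖x‖₂` reduces the claim to the kernel bound
`‖T_c φ_J - φ_J‖₁ ≤ 2^{-J} ‖c‖ ‖∇φ‖₁`. Writing `φ (w - c) - φ w` as the integral of `Dφ` along the
segment from `w` to `w - c` and integrating in `w` (Tonelli and translation invariance) gives
`‖T_c φ - φ‖₁ ≤ ‖c‖ ‖∇φ‖₁`; the dilation `φ ↦ φ_J` preserves the `L¹` norm and scales `c` by `2^{-J}`.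
-/

open MeasureTheory ContinuousLinearMap Module
open scoped ENNReal Convolution

namespace MeasureTheory

section Young

variable {G : Type*} [AddCommGroup G] [MeasurableSpace G] [MeasurableAdd₂ G] [MeasurableNeg G]
  {μ : Measure G} [μ.IsAddRightInvariant] [μ.IsNegInvariant]

theorem lintegral_comp_sub_left_eq_self (f : G → ℝ≥0∞) (u : G) :
    ∫⁻ v, f (u - v) ∂μ = ∫⁻ v, f v ∂μ := by
  simp_rw [← neg_sub _ u, lintegral_sub_right_eq_self (fun v => f (-v)) u]
  exact lintegral_neg_eq_self f

theorem enorm_convolution_sq_le {x h : G → ℝ} (hx : Measurable x) (hh : Measurable h) (u : G) :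
    ‖(x ⋆[mul ℝ ℝ, μ] h) u‖ₑ ^ 2 ≤
      (∫⁻ v, ‖x v‖ₑ ^ 2 * ‖h (u - v)‖ₑ ∂μ) * ∫⁻ v, ‖h v‖ₑ ∂μ := by
  have hH : Measurable fun v => ‖h (u - v)‖ₑ := by fun_prop
  -- Cauchy–Schwarz against the weight `‖h (u - ·)‖ₑ`
  have split : ∀ v, ‖x v‖ₑ * ‖h (u - v)‖ₑ =
      (‖x v‖ₑ ^ 2 * ‖h (u - v)‖ₑ) ^ (2⁻¹ : ℝ) * ‖h (u - v)‖ₑ ^ (2⁻¹ : ℝ) := by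
    intro v
    rw [ENNReal.mul_rpow_of_nonneg _ _ (by norm_num), mul_assoc,
      ← ENNReal.rpow_add_of_nonneg _ _ (by norm_num) (by norm_num), ← ENNReal.rpow_natCast,
      ← ENNReal.rpow_mul]
    norm_num
  have holder := ENNReal.lintegral_mul_norm_pow_le (μ := μ)
    (f := fun v => ‖x v‖ₑ ^ 2 * ‖h (u - v)‖ₑ) (g := fun v => ‖h (u - v)‖ₑ)
    ((hx.enorm.pow_const 2).mul hH).aemeasurable hH.aemeasurable
    (p := 2⁻¹) (q := 2⁻¹) (by norm_num) (by norm_num) (by norm_num)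
  rw [lintegral_comp_sub_left_eq_self (fun v => ‖h v‖ₑ), ← lintegral_congr split] at holder
  calc ‖(x ⋆[mul ℝ ℝ, μ] h) u‖ₑ ^ 2
      ≤ (∫⁻ v, ‖x v‖ₑ * ‖h (u - v)‖ₑ ∂μ) ^ 2 := by
        gcongr
        simpa only [convolution_mul, enorm_mul] using
          enorm_integral_le_lintegral_enorm (μ := μ) fun v => x v * h (u - v)
    _ ≤ ((∫⁻ v, ‖x v‖ₑ ^ 2 * ‖h (u - v)‖ₑ ∂μ) ^ (2⁻¹ : ℝ) *
          (∫⁻ v, ‖h v‖ₑ ∂μ) ^ (2⁻¹ : ℝ)) ^ 2 := by gcongr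
    _ = _ := by
        rw [mul_pow, ← ENNReal.rpow_mul_natCast, ← ENNReal.rpow_mul_natCast]
        norm_num

variable [SFinite μ]

theorem eLpNorm_two_convolution_le_of_measurable {x h : G → ℝ} (hx : Measurable x)
    (hh : Measurable h) : eLpNorm (x ⋆[mul ℝ ℝ, μ] h) 2 μ ≤ eLpNorm h 1 μ * eLpNorm x 2 μ := by
  have sq_eLpNorm_two (f : G → ℝ) : eLpNorm f 2 μ ^ 2 = ∫⁻ u, ‖f u‖ₑ ^ 2 ∂μ := by
    simpa using eLpNorm_nnreal_pow_eq_lintegral (μ := μ) (f := f) (p := 2) two_ne_zero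
  have hX : Measurable fun v => ‖x v‖ₑ ^ 2 := by fun_prop
  have hXH : Measurable (Function.uncurry fun u v => ‖x v‖ₑ ^ 2 * ‖h (u - v)‖ₑ) := by
    fun_prop
  set I := ∫⁻ v, ‖h v‖ₑ ∂μ
  rw [← ENNReal.pow_le_pow_left_iff two_ne_zero, mul_pow, sq_eLpNorm_two, sq_eLpNorm_two,
    eLpNorm_one_eq_lintegral_enorm]
  calc ∫⁻ u, ‖(x ⋆[mul ℝ ℝ, μ] h) u‖ₑ ^ 2 ∂μ
      ≤ ∫⁻ u, (∫⁻ v, ‖x v‖ₑ ^ 2 * ‖h (u - v)‖ₑ ∂μ) * I ∂μ :=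
        lintegral_mono (enorm_convolution_sq_le hx hh)
    _ = (∫⁻ v, ∫⁻ u, ‖x v‖ₑ ^ 2 * ‖h (u - v)‖ₑ ∂μ ∂μ) * I := by
        rw [lintegral_mul_const _ hXH.lintegral_prod_right,
          lintegral_lintegral_swap hXH.aemeasurable]
    _ = (∫⁻ v, ‖x v‖ₑ ^ 2 * I ∂μ) * I := by
        congr 1
        refine lintegral_congr fun v => ?_
        rw [lintegral_const_mul _ (by fun_prop), lintegral_sub_right_eq_self (‖h ·‖ₑ) v]
    _ = I ^ 2 * ∫⁻ u, ‖x u‖ₑ ^ 2 ∂μ := by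
        rw [lintegral_mul_const _ hX]
        ring

theorem eLpNorm_two_convolution_le {x h : G → ℝ} (hx : AEStronglyMeasurable x μ)
    (hh : AEStronglyMeasurable h μ) :
    eLpNorm (x ⋆[mul ℝ ℝ, μ] h) 2 μ ≤ eLpNorm h 1 μ * eLpNorm x 2 μ := by
  rw [convolution_congr _ hx.ae_eq_mk hh.ae_eq_mk, eLpNorm_congr_ae hx.ae_eq_mk,
    eLpNorm_congr_ae hh.ae_eq_mk]
  exact eLpNorm_two_convolution_le_of_measurable hx.stronglyMeasurable_mk.measurable
    hh.stronglyMeasurable_mk.measurable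

end Young

section Translation

variable {𝕜 G E E' F : Type*} [NontriviallyNormedField 𝕜] [NormedAddCommGroup E]
  [NormedSpace 𝕜 E] [NormedAddCommGroup E'] [NormedSpace 𝕜 E'] [NormedAddCommGroup F]
  [NormedSpace 𝕜 F] [NormedSpace ℝ F] [AddCommGroup G] [MeasurableSpace G] {μ : Measure G}
  {L : E →L[𝕜] E' →L[𝕜] F}

theorem comp_sub_convolution_eq_convolution_comp_sub [MeasurableAdd G] [μ.IsAddRightInvariant]
    (f : G → E) (g : G → E') (c : G) :
    (fun t => f (t - c)) ⋆[L, μ] g = f ⋆[L, μ] fun t => g (t - c) := by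
  ext u
  simp only [convolution_def]
  rw [← integral_add_right_eq_self _ c]
  simp only [add_sub_cancel_right, sub_add_eq_sub_sub]

theorem ConvolutionExists.distrib_sub {f : G → E} {g g' : G → E'}
    (hfg : ConvolutionExists f g L μ) (hfg' : ConvolutionExists f g' L μ) :
    f ⋆[L, μ] (g - g') = f ⋆[L, μ] g - f ⋆[L, μ] g' := by
  ext u
  simp only [convolution_def, Pi.sub_apply, map_sub, integral_sub (hfg u) (hfg' u)]

end Translation

theorem eLpNorm_comp_sub_convolution_sub_convolution_le {G : Type*} [AddCommGroup G]
    [TopologicalSpace G] [IsTopologicalAddGroup G] [MeasurableSpace G] [BorelSpace G]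
    [MeasurableAdd₂ G] [MeasurableNeg G] {μ : Measure G} [SFinite μ] [IsLocallyFiniteMeasure μ]
    [μ.IsAddRightInvariant] [μ.IsNegInvariant] {x k : G → ℝ} (hx : MemLp x 2 μ)
    (hk : Continuous k) (hk_supp : HasCompactSupport k) (c : G) :
    eLpNorm ((fun v => x (v - c)) ⋆[mul ℝ ℝ, μ] k - x ⋆[mul ℝ ℝ, μ] k) 2 μ ≤
      eLpNorm ((fun w => k (w - c)) - k) 1 μ * eLpNorm x 2 μ := by
  have hk_c : Continuous fun w => k (w - c) := hk.comp (continuous_sub_right c)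
  have hk_c_supp : HasCompactSupport fun w => k (w - c) :=
    hk_supp.comp_homeomorph (Homeomorph.subRight c)
  have hx_loc := hx.locallyIntegrable one_le_two
  rw [comp_sub_convolution_eq_convolution_comp_sub,
    ← (hk_c_supp.convolutionExists_right _ hx_loc hk_c).distrib_sub
      (hk_supp.convolutionExists_right _ hx_loc hk)]
  exact eLpNorm_two_convolution_le hx.aestronglyMeasurable (hk_c.sub hk).aestronglyMeasurable

end MeasureTheory

section Increment

variable {E F : Type*} [NormedAddCommGroup E] [NormedSpace ℝ E] [NormedAddCommGroup F]
  [NormedSpace ℝ F] [CompleteSpace F]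

theorem enorm_sub_le_lintegral_enorm_fderiv {φ : E → F} (hφ : ContDiff ℝ 1 φ) (a d : E) :
    ‖φ (a - d) - φ a‖ₑ ≤ ‖d‖ₑ * ∫⁻ t in Set.Ioc (0 : ℝ) 1, ‖fderiv ℝ φ (a - t • d)‖ₑ := by
  have hDφ : Continuous fun t : ℝ => fderiv ℝ φ (a - t • d) :=
    (hφ.continuous_fderiv one_ne_zero).comp (by fun_prop)
  have hderiv (t : ℝ) :
      HasDerivAt (fun t : ℝ => φ (a - t • d)) (fderiv ℝ φ (a - t • d) (-d)) t := by
    have hline : HasDerivAt (fun t : ℝ => a - t • d) (-d) t := by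
      simpa using ((hasDerivAt_id t).smul_const d).const_sub a
    exact ((hφ.differentiable one_ne_zero).differentiableAt.hasFDerivAt).comp_hasDerivAt t hline
  have ftc : φ (a - d) - φ a = ∫ t in (0 : ℝ)..1, fderiv ℝ φ (a - t • d) (-d) := by
    rw [intervalIntegral.integral_eq_sub_of_hasDerivAt (fun t _ => hderiv t)
      ((hDφ.clm_apply continuous_const).intervalIntegrable 0 1)]
    simp
  calc ‖φ (a - d) - φ a‖ₑ
      ≤ ∫⁻ t in Set.Ioc (0 : ℝ) 1, ‖fderiv ℝ φ (a - t • d) (-d)‖ₑ := by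
        rw [ftc, intervalIntegral.integral_of_le zero_le_one]
        exact enorm_integral_le_lintegral_enorm _
    _ ≤ ∫⁻ t in Set.Ioc (0 : ℝ) 1, ‖d‖ₑ * ‖fderiv ℝ φ (a - t • d)‖ₑ := by
        refine lintegral_mono fun t => ?_
        rw [mul_comm, ← enorm_neg d]
        exact (fderiv ℝ φ (a - t • d)).le_opENorm (-d)
    _ = ‖d‖ₑ * ∫⁻ t in Set.Ioc (0 : ℝ) 1, ‖fderiv ℝ φ (a - t • d)‖ₑ :=
        lintegral_const_mul _ hDφ.enorm.measurable

variable [MeasurableSpace E] [BorelSpace E]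

theorem lintegral_enorm_comp_sub_sub_le {μ : Measure E} [SFinite μ] [μ.IsAddRightInvariant]
    {φ : E → F} (hφ : ContDiff ℝ 1 φ) (c : E) :
    ∫⁻ w, ‖φ (w - c) - φ w‖ₑ ∂μ ≤ ‖c‖ₑ * ∫⁻ w, ‖fderiv ℝ φ w‖ₑ ∂μ := by
  have hDφ : Continuous fun p : E × ℝ => ‖fderiv ℝ φ (p.1 - p.2 • c)‖ₑ :=
    (hφ.continuous_fderiv one_ne_zero).enorm.comp (by fun_prop)
  calc ∫⁻ w, ‖φ (w - c) - φ w‖ₑ ∂μ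
      ≤ ∫⁻ w, ‖c‖ₑ * (∫⁻ t in Set.Ioc (0 : ℝ) 1, ‖fderiv ℝ φ (w - t • c)‖ₑ) ∂μ :=
        lintegral_mono fun w => enorm_sub_le_lintegral_enorm_fderiv hφ w c
    _ = ‖c‖ₑ * ∫⁻ t in Set.Ioc (0 : ℝ) 1, (∫⁻ w, ‖fderiv ℝ φ (w - t • c)‖ₑ ∂μ) := by
        rw [lintegral_const_mul _ hDφ.measurable.lintegral_prod_right,
          lintegral_lintegral_swap hDφ.measurable.aemeasurable]
    _ = ‖c‖ₑ * ∫⁻ w, ‖fderiv ℝ φ w‖ₑ ∂μ := by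
        simp_rw [lintegral_sub_right_eq_self (‖fderiv ℝ φ ·‖ₑ)]
        simp

variable [FiniteDimensional ℝ E] {μ : Measure E} [μ.IsAddHaarMeasure]

theorem MeasureTheory.Measure.lintegral_comp_smul (f : E → ℝ≥0∞) {R : ℝ} (hR : R ≠ 0) :
    ∫⁻ w, f (R • w) ∂μ = ENNReal.ofReal |(R ^ finrank ℝ E)⁻¹| * ∫⁻ w, f w ∂μ := by
  rw [← smul_eq_mul, ← lintegral_smul_measure, ← Measure.map_addHaar_smul μ hR]
  exact (lintegral_map_equiv f (Homeomorph.smulOfNeZero R hR).toMeasurableEquiv).symm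

theorem lintegral_enorm_dilate_comp_sub_sub_le {φ : E → F} (hφ : ContDiff ℝ 1 φ) {s : ℝ}
    (hs : 0 < s) (c : E) :
    ∫⁻ w, ‖s ^ finrank ℝ E • φ (s • (w - c)) - s ^ finrank ℝ E • φ (s • w)‖ₑ ∂μ ≤
      ENNReal.ofReal s * ‖c‖ₑ * ∫⁻ w, ‖fderiv ℝ φ w‖ₑ ∂μ := by
  have hmass : ‖s ^ finrank ℝ E‖ₑ * ENNReal.ofReal |(s ^ finrank ℝ E)⁻¹| = 1 := by
    rw [Real.enorm_eq_ofReal_abs, ← ENNReal.ofReal_mul (abs_nonneg _), ← abs_mul,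
      mul_inv_cancel₀ (pow_ne_zero _ hs.ne'), abs_one, ENNReal.ofReal_one]
  calc ∫⁻ w, ‖s ^ finrank ℝ E • φ (s • (w - c)) - s ^ finrank ℝ E • φ (s • w)‖ₑ ∂μ
      = ‖s ^ finrank ℝ E‖ₑ * ∫⁻ w, ‖φ (s • w - s • c) - φ (s • w)‖ₑ ∂μ := by
        simp_rw [smul_sub, ← smul_sub, enorm_smul]
        exact lintegral_const_mul' _ _ enorm_ne_top
    _ = ∫⁻ w, ‖φ (w - s • c) - φ w‖ₑ ∂μ := by
        rw [Measure.lintegral_comp_smul (fun w => ‖φ (w - s • c) - φ w‖ₑ) hs.ne', ← mul_assoc,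
          hmass, one_mul]
    _ ≤ ENNReal.ofReal s * ‖c‖ₑ * ∫⁻ w, ‖fderiv ℝ φ w‖ₑ ∂μ := by
        rw [← Real.enorm_eq_ofReal hs.le, ← enorm_smul]
        exact lintegral_enorm_comp_sub_sub_le hφ _

end Increment

/-- Translation stability of the multiscale averaging `Φ_J x = x ⋆ φ_J`, with
`φ_J(u) = 2^{−nJ} φ(2^{−J} u)`:
`‖(T_c x) ⋆ φ_J − x ⋆ φ_J‖_{L²} ≤ 2^{−J} ‖c‖ ‖∇φ‖_{L¹} ‖x‖_{L²}`. -/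
theorem averaging_translation_stability
    {n : ℕ} (J : ℤ) (φ : EuclideanSpace ℝ (Fin n) → ℝ)
    (hφ : ContDiff ℝ 1 φ) (hsupp : HasCompactSupport φ)
    (x : EuclideanSpace ℝ (Fin n) → ℝ) (hx : MemLp x 2 volume)
    (c : EuclideanSpace ℝ (Fin n)) :
    eLpNorm
      (fun u => (∫ v, x (v - c) * ((2 : ℝ) ^ (-(n : ℤ) * J) * φ ((2 : ℝ) ^ (-J) • (u - v)))) -
        ∫ v, x v * ((2 : ℝ) ^ (-(n : ℤ) * J) * φ ((2 : ℝ) ^ (-J) • (u - v)))) 2 volume ≤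
    ENNReal.ofReal ((2 : ℝ) ^ (-J) * ‖c‖ * ∫ u, ‖fderiv ℝ φ u‖) * eLpNorm x 2 volume := by
  set s : ℝ := (2 : ℝ) ^ (-J)
  have hs : 0 < s := by positivity
  have hscale : (2 : ℝ) ^ (-(n : ℤ) * J) = s ^ n := by
    rw [neg_mul, ← mul_neg, mul_comm, zpow_mul, zpow_natCast]
  set k : EuclideanSpace ℝ (Fin n) → ℝ := fun w => s ^ n * φ (s • w)
  have hk : Continuous k := by fun_prop (disch := exact hφ.continuous)
  have hk_supp : HasCompactSupport k :=
    (hsupp.comp_homeomorph (Homeomorph.smulOfNeZero s hs.ne')).mul_left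
  have hDφ : Integrable (fderiv ℝ φ) :=
    (hφ.continuous_fderiv one_ne_zero).integrable_of_hasCompactSupport (hsupp.fderiv (𝕜 := ℝ))
  have hconv : (fun u => (∫ v, x (v - c) * ((2 : ℝ) ^ (-(n : ℤ) * J) * φ (s • (u - v)))) -
        ∫ v, x v * ((2 : ℝ) ^ (-(n : ℤ) * J) * φ (s • (u - v)))) =
      (fun v => x (v - c)) ⋆[mul ℝ ℝ] k - x ⋆[mul ℝ ℝ] k := by
    ext u
    simp only [hscale, Pi.sub_apply, convolution_mul, k]
  rw [hconv]
  refine (eLpNorm_comp_sub_convolution_sub_convolution_le hx hk hk_supp c).trans ?_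
  gcongr
  rw [eLpNorm_one_eq_lintegral_enorm, ENNReal.ofReal_mul (by positivity),
    ENNReal.ofReal_mul hs.le, ofReal_norm, ofReal_integral_norm_eq_lintegral_enorm hDφ]
  simpa [k, finrank_euclideanSpace_fin, smul_eq_mul] using
    lintegral_enorm_dilate_comp_sub_sub_le (μ := volume) hφ hs c
end
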